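/- Let σ be the multiset of complex roots of the Wronskian polynomial W, counted with multiplicity. Then all roots are nonzero and the two trace formulas hold: Σ_{λ∈σ} 1/λ = Σ_{n=1}^N ω_n and Σ_{λ∈σ} 1/λ² = Σ_{n=1}^N Σ_{k=1}^N e^{−|x_n − x_k|} ω_n ω_k + 2 Σ_{n=1}^N υ_n. -/

import Mathlib

open scoped BigOperators

/-- Transfer matrix across an interval of length `d` for `-f'' + (1/4) f = 0`. -/
noncomputable def Tmat (d : ℝ) : Matrix (Fin 2) (Fin 2) ℂ :=
  !![Complex.cosh ((d : ℂ) / 2), 2 * Complex.sinh ((d : ℂ) / 2);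
     (1 / 2) * Complex.sinh ((d : ℂ) / 2), Complex.cosh ((d : ℂ) / 2)]

/-- Interface matrix at a point carrying weight `w` and dipole `v`. -/
noncomputable def Omat (w v : ℝ) (z : ℂ) : Matrix (Fin 2) (Fin 2) ℂ :=
  !![1, 0; -(z * (w : ℂ) + z ^ 2 * (v : ℂ)), 1]

/-- The value `(φ₋(z, x_N+), φ₋'(z, x_N+))` obtained by propagating the initial data
`(e^{x_0/2}, (1/2) e^{x_0/2})` through all the point interactions (0-indexed data). -/
noncomputable def transVec (N : ℕ) (x w v : ℕ → ℝ) (z : ℂ) : Fin 2 → ℂ :=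
  Matrix.mulVec
    ((((List.range (N - 1)).reverse.map
        (fun j => Omat (w (j + 1)) (v (j + 1)) z * Tmat (x (j + 1) - x j))).prod)
      * Omat (w 0) (v 0) z)
    ![Complex.exp ((x 0 : ℂ) / 2), (1 / 2) * Complex.exp ((x 0 : ℂ) / 2)]

/-- The Wronskian polynomial `W(z)` of the generalized spectral problem
`-f'' + (1/4) f = z ω f + z² υ f` (`W ≡ 1` when `N = 0`). -/
noncomputable def Wron (N : ℕ) (x w v : ℕ → ℝ) (z : ℂ) : ℂ :=
  if N = 0 then 1
  else Complex.exp (-(x (N - 1) : ℂ) / 2) *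
    (transVec N x w v z 1 + (1 / 2) * transVec N x w v z 0)

/-- The Weyl--Titchmarsh function `M(z)`. -/
noncomputable def WeylM (N : ℕ) (x w v : ℕ → ℝ) (z : ℂ) : ℂ :=
  Complex.exp ((x (N - 1) : ℂ) / 2) *
    ((1 / 2) * transVec N x w v z 0 - transVec N x w v z 1) / Wron N x w v z

/-- `f` (with distributional derivative represented by `f'`) is a solution at `z` of the
generalized spectral problem `-f'' + (1/4) f = z ω f + z² υ f` with
`ω = Σ_{n<N} w n δ_{x n}`, `υ = Σ_{n<N} v n δ_{x n}`: it is continuous, twice differentiable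
away from the points `x n` with `f'' = (1/4) f` there, and the one-sided limits of `f'` at
each `x n` exist and satisfy the jump condition
`f'(x_n+) - f'(x_n-) = -(z w_n + z² v_n) f (x_n)`. -/
def IsSol (N : ℕ) (x w v : ℕ → ℝ) (z : ℂ) (f f' : ℝ → ℂ) : Prop :=
  Continuous f ∧
  (∀ t : ℝ, (∀ n < N, t ≠ x n) →
    HasDerivAt f (f' t) t ∧ HasDerivAt f' ((1 / 4) * f t) t) ∧
  (∀ n < N, ∃ L R : ℂ,
    Filter.Tendsto f' (nhdsWithin (x n) (Set.Iio (x n))) (nhds L) ∧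
    Filter.Tendsto f' (nhdsWithin (x n) (Set.Ioi (x n))) (nhds R) ∧
    R - L = -(z * (w n : ℂ) + z ^ 2 * (v n : ℂ)) * f (x n))


/-!
In the basis `e^{±t/2}` of solutions of `-f'' + f/4 = 0` the free transfer matrices act trivially,
so `W` is the first component of the polynomial recursion `jost`, which starts at `(1, 0)` and is
updated at each point interaction. Its low-order coefficients give
`W(z) = 1 - (Σ ω_n) z + W₂ z² + O(z³)`. As `W(0) = 1`, `W(z) = ∏ (1 - z/λ)` over its roots, hence
`Σ 1/λ = -W₁` and `Σ 1/λ² = W₁² - 2 W₂`; since `e^{-|x_j - x_k|} = e^{x_j - x_k}` for `j < k`,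
`W₁² - 2 W₂` is the symmetric double sum of the statement.
-/

open Polynomial Matrix

noncomputable def jumpPoly (w v : ℝ) : ℝ[X] := C w * X + C v * X ^ 2

/-- After the first `n` point interactions the solution is `α(z) e^{t/2} + β(z) e^{-t/2}`;
`jost x w v n = (α, β)`. -/
noncomputable def jost (x w v : ℕ → ℝ) : ℕ → ℝ[X] × ℝ[X]
  | 0 => (1, 0)
  | n + 1 =>
    ((jost x w v n).1 - jumpPoly (w n) (v n) *
        ((jost x w v n).1 + C (Real.exp (-x n)) * (jost x w v n).2),
      (jost x w v n).2 + jumpPoly (w n) (v n) *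
        (C (Real.exp (x n)) * (jost x w v n).1 + (jost x w v n).2))

/-- The Cauchy data `(f t, f' t)` of `f = α e^{s/2} + β e^{-s/2}`. -/
noncomputable def expSolData (t : ℝ) (α β : ℂ) : Fin 2 → ℂ :=
  ![α * Complex.exp (t / 2) + β * Complex.exp (-t / 2),
    (α * Complex.exp (t / 2) - β * Complex.exp (-t / 2)) / 2]

lemma Tmat_mulVec_expSolData (s t : ℝ) (α β : ℂ) :
    Tmat (t - s) *ᵥ expSolData s α β = expSolData t α β := by
  have h : Complex.exp (t / 2) = Complex.exp (((t - s : ℝ) : ℂ) / 2) * Complex.exp (s / 2) := by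
    rw [← Complex.exp_add]; push_cast; ring_nf
  ext i; fin_cases i <;>
  · simp only [Tmat, expSolData, mulVec, dotProduct, Fin.sum_univ_two, Fin.zero_eta, Fin.mk_one,
      Fin.isValue, of_apply, cons_val', cons_val_fin_one, cons_val_zero, cons_val_one,
      Complex.cosh, Complex.sinh, Complex.ofReal_sub, neg_div, Complex.exp_neg, h]
    field_simp
    ring

lemma Omat_mulVec_expSolData (w v : ℝ) (z : ℂ) (t : ℝ) (α β : ℂ) :
    Omat w v z *ᵥ expSolData t α β =
      expSolData t (α - (z * w + z ^ 2 * v) * (α + Complex.exp (-t) * β))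
        (β + (z * w + z ^ 2 * v) * (Complex.exp t * α + β)) := by
  have h : Complex.exp t = Complex.exp (t / 2) * Complex.exp (t / 2) := by
    rw [← Complex.exp_add]; ring_nf
  ext i; fin_cases i <;>
  · simp only [Omat, expSolData, mulVec, dotProduct, Fin.sum_univ_two, Fin.zero_eta, Fin.mk_one,
      Fin.isValue, of_apply, cons_val', cons_val_fin_one, cons_val_zero, cons_val_one,
      neg_div, Complex.exp_neg, h]
    field_simp
    ring

lemma aeval_jumpPoly (w v : ℝ) (z : ℂ) : aeval z (jumpPoly w v) = z * w + z ^ 2 * v := by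
  simp only [jumpPoly, map_add, map_mul, aeval_C, aeval_X, map_pow, Complex.coe_algebraMap]
  ring

lemma transVec_one (x w v : ℕ → ℝ) (z : ℂ) :
    transVec 1 x w v z = Omat (w 0) (v 0) z *ᵥ expSolData (x 0) 1 0 := by
  simp only [transVec, expSolData, Nat.sub_self, List.range_zero, List.reverse_nil, List.map_nil,
    List.prod_nil, Matrix.one_mul]
  congr 1
  ext i; fin_cases i <;> simp [div_eq_inv_mul]

lemma transVec_add_two (n : ℕ) (x w v : ℕ → ℝ) (z : ℂ) :
    transVec (n + 2) x w v z =
      (Omat (w (n + 1)) (v (n + 1)) z * Tmat (x (n + 1) - x n)) *ᵥ transVec (n + 1) x w v z := by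
  simp only [transVec, show n + 2 - 1 = n + 1 from rfl, Nat.add_sub_cancel, List.range_succ,
    List.reverse_append, List.reverse_cons, List.reverse_nil, List.nil_append,
    List.map_cons, List.cons_append, List.prod_cons, mulVec_mulVec, Matrix.mul_assoc]

lemma transVec_eq_expSolData (n : ℕ) (x w v : ℕ → ℝ) (z : ℂ) :
    transVec (n + 1) x w v z =
      expSolData (x n) (aeval z (jost x w v (n + 1)).1) (aeval z (jost x w v (n + 1)).2) := by
  induction n with
  | zero =>
    rw [transVec_one, Omat_mulVec_expSolData]
    simp [jost, aeval_jumpPoly]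
  | succ n ih =>
    rw [transVec_add_two, ← mulVec_mulVec, ih, Tmat_mulVec_expSolData, Omat_mulVec_expSolData]
    simp [jost, aeval_jumpPoly, Complex.ofReal_exp]

lemma Wron_eq_aeval_jost (N : ℕ) (x w v : ℕ → ℝ) (z : ℂ) :
    Wron N x w v z = aeval z (jost x w v N).1 := by
  rcases N with _ | n
  · simp [Wron, jost]
  · rw [Wron, if_neg n.succ_ne_zero, Nat.add_sub_cancel, transVec_eq_expSolData]
    simp only [expSolData, Matrix.cons_val_zero, Matrix.cons_val_one]
    rw [neg_div, Complex.exp_neg]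
    field_simp
    ring

section coefficients

variable (w v : ℝ) (f : ℝ[X])

@[simp] lemma coeff_jumpPoly_mul_zero : (jumpPoly w v * f).coeff 0 = 0 := by
  simp [jumpPoly]

@[simp] lemma coeff_jumpPoly_mul_one : (jumpPoly w v * f).coeff 1 = w * f.coeff 0 := by
  simp [jumpPoly, add_mul, pow_two, mul_assoc, coeff_X_mul]

@[simp] lemma coeff_jumpPoly_mul_two :
    (jumpPoly w v * f).coeff 2 = w * f.coeff 1 + v * f.coeff 0 := by
  simp [jumpPoly, add_mul, pow_two, mul_assoc, coeff_X_mul]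

end coefficients

open Finset in
lemma jost_coeff (x w v : ℕ → ℝ) (n : ℕ) :
    (jost x w v n).1.coeff 0 = 1 ∧ (jost x w v n).2.coeff 0 = 0 ∧
    (jost x w v n).1.coeff 1 = -∑ k ∈ range n, w k ∧
    (jost x w v n).2.coeff 1 = ∑ k ∈ range n, w k * Real.exp (x k) ∧
    (jost x w v n).1.coeff 2 =
      ∑ k ∈ range n, ∑ j ∈ range k, w j * w k * (1 - Real.exp (x j - x k)) -
        ∑ k ∈ range n, v k := by
  induction n with
  | zero => simp [jost, coeff_one]
  | succ n ih =>
    obtain ⟨α₀, β₀, α₁, β₁, α₂⟩ := ih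
    have hcross : ∑ j ∈ range n, w j * w n * (1 - Real.exp (x j - x n)) =
        w n * ∑ j ∈ range n, w j - w n * Real.exp (-x n) * ∑ j ∈ range n, w j * Real.exp (x j) := by
      rw [mul_sum, mul_sum, ← sum_sub_distrib]
      refine sum_congr rfl fun j _ => ?_
      rw [sub_eq_neg_add (x j), Real.exp_add]
      ring
    simp only [jost, coeff_add, coeff_sub, coeff_C_mul, coeff_jumpPoly_mul_zero,
      coeff_jumpPoly_mul_one, coeff_jumpPoly_mul_two, α₀, β₀, α₁, β₁, α₂, sum_range_succ, hcross]
    refine ⟨?_, ?_, ?_, ?_, ?_⟩ <;> ring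

namespace Polynomial

lemma coeff_prod_one_sub_C_mul_X {R : Type*} [CommRing R] (t : Multiset R) :
    (t.map fun μ => 1 - C μ * X).prod.coeff 0 = 1 ∧
    (t.map fun μ => 1 - C μ * X).prod.coeff 1 = -t.sum ∧
    (t.map fun μ => 1 - C μ * X).prod.coeff 1 ^ 2 -
      2 * (t.map fun μ => 1 - C μ * X).prod.coeff 2 = (t.map (· ^ 2)).sum := by
  induction t using Multiset.induction_on with
  | empty => simp [coeff_one]
  | cons μ s ih =>
    obtain ⟨h₀, h₁, h₂⟩ := ih
    simp only [Multiset.map_cons, Multiset.prod_cons, Multiset.sum_cons, sub_mul, one_mul,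
      mul_assoc, coeff_sub, coeff_C_mul, coeff_X_mul, coeff_X_mul_zero, h₀]
    exact ⟨by ring, by rw [h₁]; ring, by linear_combination h₂⟩

variable {K : Type*} [Field K] {P : K[X]}

lemma zero_notMem_roots_of_coeff_zero_ne_zero (h0 : P.coeff 0 ≠ 0) : (0 : K) ∉ P.roots := by
  simp [mem_roots', ← coeff_zero_eq_eval_zero, h0]

lemma Splits.eq_prod_one_sub_C_inv_roots_mul_X (hP : P.Splits) (h0 : P.coeff 0 = 1) :
    P = ((P.roots.map (·⁻¹)).map fun μ => 1 - C μ * X).prod := by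
  have hfactor : ∀ a ∈ P.roots, X - C a = C (-a) * (1 - C a⁻¹ * X) := by
    intro a ha
    have ha0 : a ≠ 0 := by
      rintro rfl
      exact zero_notMem_roots_of_coeff_zero_ne_zero (h0 ▸ one_ne_zero) ha
    rw [mul_sub, mul_one, ← mul_assoc, ← C_mul, neg_mul, mul_inv_cancel₀ ha0, C_neg, C_neg, C_1]
    ring
  set Q := ((P.roots.map (·⁻¹)).map fun μ => 1 - C μ * X).prod
  have hPQ : P = C (P.leadingCoeff * (P.roots.map fun a => -a).prod) * Q := by
    conv_lhs => rw [hP.eq_prod_roots, Multiset.map_congr rfl hfactor, Multiset.prod_map_mul]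
    simp only [Q, C_mul, map_multiset_prod, Multiset.map_map, Function.comp_def, mul_assoc]
  have hc : P.leadingCoeff * (P.roots.map fun a => -a).prod = 1 := by
    have h := congrArg (coeff · 0) hPQ
    simp only [coeff_C_mul, h0, (coeff_prod_one_sub_C_mul_X _).1, mul_one, Q] at h
    exact h.symm
  rw [hPQ, hc, C_1, one_mul]

theorem Splits.sum_inv_roots_and_sum_inv_sq_roots (hP : P.Splits) (h0 : P.coeff 0 = 1) :
    (P.roots.map fun a => a⁻¹).sum = -P.coeff 1 ∧
    (P.roots.map fun a => (a ^ 2)⁻¹).sum = P.coeff 1 ^ 2 - 2 * P.coeff 2 := by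
  obtain ⟨-, h₁, h₂⟩ := coeff_prod_one_sub_C_mul_X (P.roots.map (·⁻¹))
  rw [← hP.eq_prod_one_sub_C_inv_roots_mul_X h0] at h₁ h₂
  rw [Multiset.map_map] at h₂
  simp only [Function.comp_def, inv_pow] at h₂
  exact ⟨by rw [h₁, neg_neg], h₂.symm⟩

end Polynomial

open Finset in
lemma sum_sum_exp_neg_abs_mul_mul (N : ℕ) (x w : ℕ → ℝ)
    (hx : ∀ i j, i < j → j < N → x i ≤ x j) :
    ∑ n ∈ range N, ∑ k ∈ range N, Real.exp (-|x n - x k|) * w n * w k =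
      (∑ n ∈ range N, w n) ^ 2 -
        2 * ∑ k ∈ range N, ∑ j ∈ range k, w j * w k * (1 - Real.exp (x j - x k)) := by
  induction N with
  | zero => simp
  | succ N ih =>
    have hxN : ∀ j ∈ range N, -|x j - x N| = x j - x N ∧ -|x N - x j| = x j - x N := by
      intro j hj
      have hle := hx j N (mem_range.1 hj) N.lt_succ_self
      rw [abs_of_nonpos (sub_nonpos.2 hle), abs_of_nonneg (sub_nonneg.2 hle)]
      constructor <;> ring
    have hcol : ∑ j ∈ range N, Real.exp (-|x j - x N|) * w j * w N =
        ∑ j ∈ range N, Real.exp (x j - x N) * w j * w N :=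
      sum_congr rfl fun j hj => by rw [(hxN j hj).1]
    have hrow : ∑ k ∈ range N, Real.exp (-|x N - x k|) * w N * w k =
        ∑ j ∈ range N, Real.exp (x j - x N) * w j * w N :=
      sum_congr rfl fun j hj => by rw [(hxN j hj).2]; ring
    have hcross : ∑ j ∈ range N, w j * w N * (1 - Real.exp (x j - x N)) =
        w N * ∑ j ∈ range N, w j - ∑ j ∈ range N, Real.exp (x j - x N) * w j * w N := by
      rw [mul_sum, ← sum_sub_distrib]
      exact sum_congr rfl fun j _ => by ring
    simp only [sum_range_succ, sum_add_distrib, hcol, hrow, hcross,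
      ih fun i j hij hj => hx i j hij (hj.trans N.lt_succ_self), sub_self, abs_zero, neg_zero,
      Real.exp_zero]
    ring

theorem stmt_6_general (N : ℕ) (x w v : ℕ → ℝ)
    (hx : ∀ i j, i < j → j < N → x i < x j)
    (P : Polynomial ℂ) (hP : ∀ z : ℂ, P.eval z = Wron N x w v z) :
    (0 : ℂ) ∉ P.roots ∧
    (P.roots.map fun lam => lam⁻¹).sum = ((∑ n ∈ Finset.range N, w n : ℝ) : ℂ) ∧
    (P.roots.map fun lam => (lam ^ 2)⁻¹).sum =
      ((∑ n ∈ Finset.range N, ∑ k ∈ Finset.range N,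
          Real.exp (-|x n - x k|) * w n * w k
        + 2 * ∑ n ∈ Finset.range N, v n : ℝ) : ℂ) := by
  have hPW : P = (jost x w v N).1.map (algebraMap ℝ ℂ) :=
    Polynomial.funext fun z => by rw [hP, Wron_eq_aeval_jost, eval_map_algebraMap]
  have hcoeff (k : ℕ) : P.coeff k = (jost x w v N).1.coeff k := by
    rw [hPW, coeff_map, Complex.coe_algebraMap]
  obtain ⟨h₀, -, h₁, -, h₂⟩ := jost_coeff x w v N
  have hP0 : P.coeff 0 = 1 := by rw [hcoeff, h₀, Complex.ofReal_one]
  obtain ⟨hsum₁, hsum₂⟩ := (IsAlgClosed.splits P).sum_inv_roots_and_sum_inv_sq_roots hP0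
  refine ⟨zero_notMem_roots_of_coeff_zero_ne_zero (hP0 ▸ one_ne_zero), ?_, ?_⟩
  · rw [hsum₁, hcoeff, h₁, Complex.ofReal_neg, neg_neg]
  · rw [hsum₂, hcoeff, hcoeff, h₁, h₂,
      sum_sum_exp_neg_abs_mul_mul N x w fun i j hij hj => (hx i j hij hj).le]
    push_cast
    ring

/-- trace formulas. If `P` is the Wronskian polynomial, all of its roots
(counted with multiplicity) are nonzero and `Σ 1/λ = Σ ω_n`,
`Σ 1/λ² = Σ_n Σ_k e^{-|x_n-x_k|} ω_n ω_k + 2 Σ υ_n`. -/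
theorem stmt_6 (N : ℕ) (hN : 1 ≤ N) (x w v : ℕ → ℝ)
    (hx : ∀ i j, i < j → j < N → x i < x j)
    (hv : ∀ n, n < N → 0 ≤ v n) (hnd : ∀ n, n < N → 0 < |w n| + v n)
    (P : Polynomial ℂ) (hP : ∀ z : ℂ, P.eval z = Wron N x w v z) :
    (0 : ℂ) ∉ P.roots ∧
    (P.roots.map fun lam => lam⁻¹).sum = ((∑ n ∈ Finset.range N, w n : ℝ) : ℂ) ∧
    (P.roots.map fun lam => (lam ^ 2)⁻¹).sum =
      ((∑ n ∈ Finset.range N, ∑ k ∈ Finset.range N,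
          Real.exp (-|x n - x k|) * w n * w k
        + 2 * ∑ n ∈ Finset.range N, v n : ℝ) : ℂ) :=
  stmt_6_general N x w v hx P hP
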